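/- arXiv:math/0509265 — 4 statements merged into one kernel-verified Lean document; each statement's English description precedes it below -/
import Mathlib

section
/- Every set partition A of [n] admits a unique decomposition A = A^{(1)} | A^{(2)} | ... | A^{(d)} where each A^{(i)} is an atomic set partition and | denotes the shifted concatenation of set partitions. -/
open scoped Classical
noncomputable section

/-- The ground set `[n] = {1, …, n}`. -/
def ground (n : ℕ) : Finset ℕ := Finset.Icc 1 n

/-- `A` is a set partition of `[n]`. -/
def IsSetPartition (n : ℕ) (A : Finset (Finset ℕ)) : Prop :=
  (∀ B ∈ A, B.Nonempty) ∧
  (∀ B ∈ A, ∀ C ∈ A, B ≠ C → Disjoint B C) ∧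
  A.sup id = ground n

/-- Shift every entry of every part by `n`. -/
def shiftP (n : ℕ) (A : Finset (Finset ℕ)) : Finset (Finset ℕ) :=
  A.image (fun B => B.image (· + n))

/-- Shifted concatenation `A|B` of a set partition `A ⊢ [n]` with `B`. -/
def concatP (n : ℕ) (A B : Finset (Finset ℕ)) : Finset (Finset ℕ) :=
  A ∪ shiftP n B

/-- `A` is an atomic set partition of `[n]`: nonempty and not a nontrivial
shifted concatenation. -/
def AtomicP (n : ℕ) (A : Finset (Finset ℕ)) : Prop :=
  IsSetPartition n A ∧ 0 < n ∧
  ¬ ∃ k B C, 0 < k ∧ k < n ∧ IsSetPartition k B ∧ IsSetPartition (n - k) C ∧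
      A = concatP k B C

/-- Shifted concatenation of a list of (size, set partition) pairs. -/
def concatListP : List (ℕ × Finset (Finset ℕ)) → ℕ × Finset (Finset ℕ)
  | [] => (0, ∅)
  | p :: L => ((concatListP L).1 + p.1, concatP p.1 p.2 (concatListP L).2)

/-- `L` is the atomic factorization `A^!` of the set partition `A ⊢ [n]`. -/
def AtomicFactorization (n : ℕ) (A : Finset (Finset ℕ))
    (L : List (ℕ × Finset (Finset ℕ))) : Prop :=
  (∀ p ∈ L, AtomicP p.1 p.2) ∧ concatListP L = (n, A)

/-- The Bell number: the number of set partitions of `[n]`. -/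
def bell (n : ℕ) : ℕ := Nat.card {A : Finset (Finset ℕ) // IsSetPartition n A}

/-- Stirling numbers of the second kind: set partitions of `[n]` into `k` parts. -/
def stirling2 (n k : ℕ) : ℕ :=
  Nat.card {A : Finset (Finset ℕ) // IsSetPartition n A ∧ A.card = k}

/-- The number of atomic set partitions of `[n]` into `k` parts. -/
def atomCount (n k : ℕ) : ℕ :=
  Nat.card {A : Finset (Finset ℕ) // AtomicP n A ∧ A.card = k}

/-- The number of atomic set partitions of `[n]`. -/
def atomCount' (n : ℕ) : ℕ := Nat.card {A : Finset (Finset ℕ) // AtomicP n A}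

/-- Refinement order: `A ≤ B` iff every part of `A` is contained in a part of `B`. -/
def refines (A B : Finset (Finset ℕ)) : Prop := ∀ a ∈ A, ∃ b ∈ B, a ⊆ b

/-- The meet `A ∧ B` of two set partitions. -/
def meetP (A B : Finset (Finset ℕ)) : Finset (Finset ℕ) :=
  ((A ×ˢ B).image fun p => p.1 ∩ p.2).filter (·.Nonempty)

/-- The set partition `{[n]}` with a single part (empty if `n = 0`). -/
def onePartP (n : ℕ) : Finset (Finset ℕ) := if n = 0 then ∅ else {ground n}

/-- The finite set of set partitions of `[n]` satisfying a predicate `P`. -/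
def SPs (n : ℕ) (P : Finset (Finset ℕ) → Prop) : Finset (Finset (Finset ℕ)) :=
  (ground n).powerset.powerset.filter fun A => IsSetPartition n A ∧ P A

/-- Covering relation for `≤_*`: `B` covers `A` if `B` is obtained from `A` by merging two
parts `a, a'` with every element of `a` smaller than every element of `a'`. -/
def coverStar (A B : Finset (Finset ℕ)) : Prop :=
  ∃ a ∈ A, ∃ a' ∈ A, a ≠ a' ∧ (∀ x ∈ a, ∀ y ∈ a', x < y) ∧
    B = insert (a ∪ a') ((A.erase a).erase a')

/-- The order `≤_*` on set partitions. -/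
def leStar : Finset (Finset ℕ) → Finset (Finset ℕ) → Prop :=
  Relation.ReflTransGen coverStar

/-- Restriction `A↓_S` of a set partition to the entries in `S`. -/
def restrictP (A : Finset (Finset ℕ)) (S : Finset ℕ) : Finset (Finset ℕ) :=
  (A.image (· ∩ S)).filter (·.Nonempty)

/-- The standardization map of a finite set `S`: sends the `i`-th smallest element of `S`
to `i` (1-indexed). -/
def stMap (S : Finset ℕ) (x : ℕ) : ℕ := (S.filter (· ≤ x)).card

/-- Standardization of a set partition: relabel its entries to `{1,…,m}` preserving order. -/
def stdP (A : Finset (Finset ℕ)) : Finset (Finset ℕ) :=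
  A.image fun b => b.image (stMap (A.sup id))

/-- The map raising `{1,…,|S|}` order-preservingly onto `S`. -/
def raiseMap (S : Finset ℕ) (x : ℕ) : ℕ := (S.sort (· ≤ ·)).getD (x - 1) 0

/-- `A↑_S`: raise the entries of `A` order-preservingly so the ground set becomes `S`. -/
def raiseP (S : Finset ℕ) (A : Finset (Finset ℕ)) : Finset (Finset ℕ) :=
  A.image fun b => b.image (raiseMap S)

/-- `IsShuffle l₁ l₂ l`: `l` is a shuffle (interleaving) of `l₁` and `l₂`. -/
inductive IsShuffle {α : Type*} : List α → List α → List α → Prop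
  | nil : IsShuffle [] [] []
  | left {a : α} {l₁ l₂ l : List α} : IsShuffle l₁ l₂ l → IsShuffle (a :: l₁) l₂ (a :: l)
  | right {a : α} {l₁ l₂ l : List α} : IsShuffle l₁ l₂ l → IsShuffle l₁ (a :: l₂) (a :: l)

/-- A word is Lyndon if it is nonempty and lexicographically strictly smaller than all of
its proper cyclic rotations. -/
def LyndonWord {α : Type*} (lt : α → α → Prop) (w : List α) : Prop :=
  w ≠ [] ∧ ∀ i, 0 < i → i < w.length → List.Lex lt w (w.rotate i)

/-- A set partition is Lyndon (with respect to a total order `lt` on atomic set partitions)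
if its atomic factorization is a Lyndon word. -/
def LyndonPartition (lt : ℕ × Finset (Finset ℕ) → ℕ × Finset (Finset ℕ) → Prop)
    (n : ℕ) (A : Finset (Finset ℕ)) : Prop :=
  ∃ L, AtomicFactorization n A L ∧ LyndonWord lt L

/-! ### Set compositions -/

/-- `Φ` is a set composition of `[n]`: an ordered sequence of nonempty pairwise disjoint
sets whose union is `[n]`. -/
def IsSetComposition (n : ℕ) (Φ : List (Finset ℕ)) : Prop :=
  (∀ B ∈ Φ, B.Nonempty) ∧ Φ.Pairwise Disjoint ∧ Φ.foldr (· ∪ ·) ∅ = ground n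

/-- Shift every entry of every part of a set composition by `n`. -/
def shiftC (n : ℕ) (Φ : List (Finset ℕ)) : List (Finset ℕ) :=
  Φ.map (·.image (· + n))

/-- Shifted concatenation `Φ|Ψ` of set compositions, `Φ ⊨ [n]`. -/
def concatC (n : ℕ) (Φ Ψ : List (Finset ℕ)) : List (Finset ℕ) := Φ ++ shiftC n Ψ

/-- An atomic set composition: nonempty and not a nontrivial shifted concatenation. -/
def AtomicC (n : ℕ) (Φ : List (Finset ℕ)) : Prop :=
  IsSetComposition n Φ ∧ 0 < n ∧
  ¬ ∃ k Ψ Γ, 0 < k ∧ k < n ∧ IsSetComposition k Ψ ∧ IsSetComposition (n - k) Γ ∧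
      Φ = concatC k Ψ Γ

/-- Shifted concatenation of a list of (size, set composition) pairs. -/
def concatListC : List (ℕ × List (Finset ℕ)) → ℕ × List (Finset ℕ)
  | [] => (0, [])
  | p :: L => ((concatListC L).1 + p.1, concatC p.1 p.2 (concatListC L).2)

/-- `L` is the atomic factorization `Φ^!` of the set composition `Φ ⊨ [n]`. -/
def AtomicFactorizationC (n : ℕ) (Φ : List (Finset ℕ))
    (L : List (ℕ × List (Finset ℕ))) : Prop :=
  (∀ p ∈ L, AtomicC p.1 p.2) ∧ concatListC L = (n, Φ)

/-- Covering relation for `≤_*` on set compositions: merge two adjacent parts `a, b` with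
every element of `a` smaller than every element of `b`. -/
def coverStarC (Φ Ψ : List (Finset ℕ)) : Prop :=
  ∃ L₁ a b L₂, Φ = L₁ ++ a :: b :: L₂ ∧ (∀ x ∈ a, ∀ y ∈ b, x < y) ∧
    Ψ = L₁ ++ (a ∪ b) :: L₂

/-- The order `≤_*` on set compositions. -/
def leStarC : List (Finset ℕ) → List (Finset ℕ) → Prop :=
  Relation.ReflTransGen coverStarC

/-- The meet operation `Φ ∧ Ψ` on set compositions: the nonempty intersections
`Φ_i ∩ Ψ_j` in lexicographic order of `(i, j)`. -/
def meetC (Φ Ψ : List (Finset ℕ)) : List (Finset ℕ) :=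
  (Φ.flatMap fun a => Ψ.map fun b => a ∩ b).filter (·.Nonempty)

/-- The one-part set composition `([n])` (empty if `n = 0`). -/
def onePartC (n : ℕ) : List (Finset ℕ) := if n = 0 then [] else [ground n]

/-- Lists of length `k` with all entries in `s`. -/
def listsOfLen (s : Finset (Finset ℕ)) : ℕ → Finset (List (Finset ℕ))
  | 0 => {[]}
  | k + 1 => (s ×ˢ listsOfLen s k).image fun p => p.1 :: p.2

/-- The finite set of set compositions of `[n]` satisfying a predicate `P`. -/
def SCs (n : ℕ) (P : List (Finset ℕ) → Prop) : Finset (List (Finset ℕ)) :=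
  ((Finset.range (n + 1)).biUnion fun k => listsOfLen (ground n).powerset k).filter
    fun Φ => IsSetComposition n Φ ∧ P Φ

/-- `Φ↑_S`: raise the entries of a set composition order-preservingly into `S`. -/
def raiseC (S : Finset ℕ) (Φ : List (Finset ℕ)) : List (Finset ℕ) :=
  Φ.map (·.image (raiseMap S))

/-- Standardization of a set composition. -/
def stdC (Φ : List (Finset ℕ)) : List (Finset ℕ) :=
  Φ.map (·.image (stMap (Φ.foldr (· ∪ ·) ∅)))

/-- `α(Φ)`: the composition of part sizes of `Φ`. -/
def alphaC (Φ : List (Finset ℕ)) : List ℕ := Φ.map Finset.card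

/-- The order `≤_#` on set compositions: `Φ ≤_# Ψ` iff `α(Φ) = α(Ψ)` and each atomic factor
of `Φ` is the standardization of the corresponding consecutive block of parts of `Ψ`. -/
def leSharp (Φ Ψ : List (Finset ℕ)) : Prop :=
  alphaC Φ = alphaC Ψ ∧
  ∃ (L : List (ℕ × List (Finset ℕ))) (Bs : List (List (Finset ℕ))),
    (∀ p ∈ L, AtomicC p.1 p.2) ∧ (concatListC L).2 = Φ ∧
    Ψ = Bs.flatten ∧ List.Forall₂ (fun b (l : ℕ × List (Finset ℕ)) => stdC b = l.2) Bs L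

/-! ### Index types -/

/-- Set partitions with their sizes. -/
abbrev SPIdx := {x : ℕ × Finset (Finset ℕ) // IsSetPartition x.1 x.2}

/-- Atomic set partitions with their sizes. -/
abbrev AtomIdx := {x : ℕ × Finset (Finset ℕ) // AtomicP x.1 x.2}

/-- Set compositions with their sizes. -/
abbrev SCIdx := {x : ℕ × List (Finset ℕ) // IsSetComposition x.1 x.2}

/-- Atomic set compositions with their sizes. -/
abbrev AtomCIdx := {x : ℕ × List (Finset ℕ) // AtomicC x.1 x.2}

/-!
Call `k` a split point of `A` if no block of `A` meets both `[k]` and its complement. A set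
partition `A` of `[n]` is `B | C` with `B` a set partition of `[k]` exactly when `k` is a split
point, and then the split points of `A` up to `k` are those of `B`. Hence `B` is atomic iff `k` is the
least positive split point of `A`: the first atomic factor of any factorization is forced, the
second factor is recovered by cancelling it, and both existence and uniqueness follow by
induction.
-/

def IsPartitionOf {α : Type*} [DecidableEq α] (S : Finset α) (A : Finset (Finset α)) : Prop :=
  (∀ B ∈ A, B.Nonempty) ∧ (∀ B ∈ A, ∀ C ∈ A, B ≠ C → Disjoint B C) ∧
    A.sup id = S

lemma Finset.sup_id_image_image {α β : Type*} [DecidableEq α] [DecidableEq β] (f : α → β)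
    (A : Finset (Finset α)) :
    (A.image (Finset.image f)).sup id = (A.sup id).image f := by
  ext y
  simp only [Finset.mem_sup, Finset.mem_image, id]
  grind

namespace IsPartitionOf

variable {α β : Type*} [DecidableEq α] [DecidableEq β] {S T : Finset α}
  {A A' B B' : Finset (Finset α)}

lemma mem_iff (hA : IsPartitionOf S A) {x : α} : x ∈ S ↔ ∃ b ∈ A, x ∈ b := by
  rw [← hA.2.2, Finset.mem_sup]
  rfl

lemma subset (hA : IsPartitionOf S A) {b : Finset α} (hb : b ∈ A) : b ⊆ S :=
  fun _ hx => hA.mem_iff.2 ⟨b, hb, hx⟩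

lemma _root_.isPartitionOf_empty_iff : IsPartitionOf ∅ A ↔ A = ∅ := by
  refine ⟨fun hA => Finset.eq_empty_of_forall_notMem fun b hb => ?_, ?_⟩
  · exact (hA.1 b hb).ne_empty (Finset.subset_empty.1 (hA.subset hb))
  · rintro rfl
    exact ⟨by simp, by simp, rfl⟩

lemma union (hA : IsPartitionOf S A) (hB : IsPartitionOf T B) (hST : Disjoint S T) :
    IsPartitionOf (S ∪ T) (A ∪ B) := by
  refine ⟨?_, ?_, by rw [Finset.sup_union, hA.2.2, hB.2.2]; rfl⟩
  · simp only [Finset.mem_union]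
    rintro b (hb | hb)
    exacts [hA.1 b hb, hB.1 b hb]
  · simp only [Finset.mem_union]
    rintro b (hb | hb) c (hc | hc) hbc
    · exact hA.2.1 b hb c hc hbc
    · exact hST.mono (hA.subset hb) (hB.subset hc)
    · exact hST.symm.mono (hB.subset hb) (hA.subset hc)
    · exact hB.2.1 b hb c hc hbc

lemma filter_subset_union (hA : IsPartitionOf S A) (hB : IsPartitionOf T B)
    (hST : Disjoint S T) : (A ∪ B).filter (· ⊆ S) = A := by
  rw [Finset.filter_union, Finset.filter_true_of_mem fun b hb => hA.subset hb,
    Finset.filter_false_of_mem fun b hb hbS => ?_, Finset.union_empty]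
  obtain ⟨x, hx⟩ := hB.1 b hb
  exact Finset.disjoint_left.1 hST (hbS hx) (hB.subset hb hx)

lemma eq_of_union_eq (hA : IsPartitionOf S A) (hA' : IsPartitionOf S A')
    (hB : IsPartitionOf T B) (hB' : IsPartitionOf T B') (hST : Disjoint S T)
    (h : A ∪ B = A' ∪ B') : A = A' ∧ B = B' := by
  constructor
  · rw [← hA.filter_subset_union hB hST, h, hA'.filter_subset_union hB' hST]
  · rw [← hB.filter_subset_union hA hST.symm, Finset.union_comm, h, Finset.union_comm,
      hB'.filter_subset_union hA' hST.symm]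

lemma filter_subset (hA : IsPartitionOf S A) (hT : ∀ b ∈ A, b ⊆ T ∨ Disjoint b T) :
    IsPartitionOf (S ∩ T) (A.filter (· ⊆ T)) := by
  refine ⟨fun b hb => hA.1 b (Finset.mem_filter.1 hb).1,
    fun b hb c hc => hA.2.1 b (Finset.mem_filter.1 hb).1 c (Finset.mem_filter.1 hc).1, ?_⟩
  ext x
  simp only [Finset.mem_sup, Finset.mem_filter, id, Finset.mem_inter, hA.mem_iff]
  constructor
  · rintro ⟨b, ⟨hb, hbT⟩, hx⟩
    exact ⟨⟨b, hb, hx⟩, hbT hx⟩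
  · rintro ⟨⟨b, hb, hx⟩, hxT⟩
    exact ⟨b, ⟨hb, (hT b hb).resolve_right fun h => Finset.disjoint_left.1 h hx hxT⟩, hx⟩

lemma filter_disjoint (hA : IsPartitionOf S A) (hT : ∀ b ∈ A, b ⊆ T ∨ Disjoint b T) :
    IsPartitionOf (S \ T) (A.filter (Disjoint · T)) := by
  refine ⟨fun b hb => hA.1 b (Finset.mem_filter.1 hb).1,
    fun b hb c hc => hA.2.1 b (Finset.mem_filter.1 hb).1 c (Finset.mem_filter.1 hc).1, ?_⟩
  ext x
  simp only [Finset.mem_sup, Finset.mem_filter, id, Finset.mem_sdiff, hA.mem_iff]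
  constructor
  · rintro ⟨b, ⟨hb, hbT⟩, hx⟩
    exact ⟨⟨b, hb, hx⟩, Finset.disjoint_left.1 hbT hx⟩
  · rintro ⟨⟨b, hb, hx⟩, hxT⟩
    exact ⟨b, ⟨hb, (hT b hb).resolve_left fun h => hxT (h hx)⟩, hx⟩

lemma image_iff {f : α → β} (hf : Function.Injective f) :
    IsPartitionOf (S.image f) (A.image (Finset.image f)) ↔ IsPartitionOf S A := by
  simp only [IsPartitionOf, Finset.forall_mem_image, Finset.image_nonempty,
    Finset.disjoint_image hf, Finset.sup_id_image_image, (Finset.image_injective hf).ne_iff,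
    (Finset.image_injective hf).eq_iff]

lemma exists_image_eq {f : α → β} (hf : Function.Injective f) {U : Finset (Finset β)}
    (hU : IsPartitionOf (S.image f) U) :
    ∃ A, IsPartitionOf S A ∧ A.image (Finset.image f) = U := by
  have hUS : U ⊆ S.powerset.image (Finset.image f) := fun b hb => by
    rw [← Finset.powerset_image]
    exact Finset.mem_powerset.2 (hU.subset hb)
  obtain ⟨A, -, rfl⟩ := Finset.subset_image_iff.1 hUS
  exact ⟨A, (image_iff hf).1 hU, rfl⟩

end IsPartitionOf

section SetPartition

variable {n k k' m m' : ℕ} {A B B' C C' : Finset (Finset ℕ)}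
  {L L₁ L₂ : List (ℕ × Finset (Finset ℕ))}

lemma IsSetPartition.isPartitionOf (hA : IsSetPartition n A) : IsPartitionOf (ground n) A :=
  hA

lemma ground_mono (h : k ≤ n) : ground k ⊆ ground n :=
  Finset.Icc_subset_Icc_right h

lemma image_add_ground (k m : ℕ) : (ground m).image (· + k) = ground (k + m) \ ground k := by
  ext x
  simp only [ground, Finset.mem_image, Finset.mem_sdiff, Finset.mem_Icc]
  constructor
  · rintro ⟨y, hy, rfl⟩
    omega
  · intro hx
    exact ⟨x - k, by omega, by omega⟩

lemma isPartitionOf_shiftP (hC : IsSetPartition m C) :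
    IsPartitionOf (ground (k + m) \ ground k) (shiftP k C) := by
  rw [← image_add_ground]
  exact (IsPartitionOf.image_iff (add_left_injective k)).2 hC.isPartitionOf

lemma isSetPartition_concatP (hB : IsSetPartition k B) (hC : IsSetPartition m C) :
    IsSetPartition (k + m) (concatP k B C) := by
  have h := hB.isPartitionOf.union (isPartitionOf_shiftP hC) Finset.disjoint_sdiff
  rwa [Finset.union_sdiff_of_subset (ground_mono (Nat.le_add_right k m))] at h

lemma concatP_inj (hB : IsSetPartition k B) (hB' : IsSetPartition k B')
    (hC : IsSetPartition m C) (hC' : IsSetPartition m C')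
    (h : concatP k B C = concatP k B' C') : B = B' ∧ C = C' := by
  obtain ⟨hBB', hCC'⟩ := hB.isPartitionOf.eq_of_union_eq hB'.isPartitionOf
    (isPartitionOf_shiftP hC) (isPartitionOf_shiftP hC') Finset.disjoint_sdiff h
  exact ⟨hBB', Finset.image_injective (Finset.image_injective (add_left_injective k)) hCC'⟩

def IsSplitPoint (k : ℕ) (A : Finset (Finset ℕ)) : Prop :=
  ∀ b ∈ A, b ⊆ ground k ∨ Disjoint b (ground k)

lemma isSplitPoint_of_isSetPartition (hA : IsSetPartition k A) : IsSplitPoint k A :=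
  fun _ hb => Or.inl (hA.isPartitionOf.subset hb)

lemma isSplitPoint_concatP_iff {j : ℕ} (hC : IsSetPartition m C) (hj : j ≤ k) :
    IsSplitPoint j (concatP k B C) ↔ IsSplitPoint j B := by
  refine Finset.forall_mem_union.trans (and_iff_left_of_imp fun _ b hb => Or.inr ?_)
  exact (Finset.sdiff_disjoint.mono_left ((isPartitionOf_shiftP hC).subset hb)).mono_right
    (ground_mono hj)

lemma exists_eq_concatP_of_isSplitPoint (hA : IsSetPartition n A) (hk : IsSplitPoint k A)
    (hkn : k ≤ n) :
    ∃ B C, IsSetPartition k B ∧ IsSetPartition (n - k) C ∧ A = concatP k B C := by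
  have hlow := hA.isPartitionOf.filter_subset hk
  rw [Finset.inter_eq_right.2 (ground_mono hkn)] at hlow
  have hhigh := hA.isPartitionOf.filter_disjoint hk
  rw [← Nat.add_sub_cancel' hkn, ← image_add_ground] at hhigh
  obtain ⟨C, hC, hCA⟩ := IsPartitionOf.exists_image_eq (add_left_injective k) hhigh
  refine ⟨_, C, hlow, hC, ?_⟩
  rw [concatP, shiftP, hCA, ← Finset.filter_or, Finset.filter_true_of_mem hk]

lemma atomicP_iff :
    AtomicP k B ↔
      IsSetPartition k B ∧ 0 < k ∧ ∀ j, 0 < j → j < k → ¬ IsSplitPoint j B := by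
  constructor
  · rintro ⟨hB, hk, hatom⟩
    refine ⟨hB, hk, fun j hj hjk hsplit => hatom ?_⟩
    obtain ⟨B', C', hB', hC', rfl⟩ := exists_eq_concatP_of_isSplitPoint hB hsplit hjk.le
    exact ⟨j, B', C', hj, hjk, hB', hC', rfl⟩
  · rintro ⟨hB, hk, hsplit⟩
    refine ⟨hB, hk, ?_⟩
    rintro ⟨j, B', C', hj, hjk, hB', hC', rfl⟩
    exact hsplit j hj hjk
      ((isSplitPoint_concatP_iff hC' le_rfl).2 (isSplitPoint_of_isSetPartition hB'))

lemma le_of_concatP_eq (hB : IsSetPartition k B) (hk : 0 < k) (hC : IsSetPartition m C)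
    (hB' : AtomicP k' B') (hC' : IsSetPartition m' C')
    (h : concatP k B C = concatP k' B' C') : k' ≤ k := by
  by_contra! hlt
  have hsplit : IsSplitPoint k (concatP k' B' C') :=
    h ▸ (isSplitPoint_concatP_iff hC le_rfl).2 (isSplitPoint_of_isSetPartition hB)
  exact (atomicP_iff.1 hB').2.2 k hk hlt ((isSplitPoint_concatP_iff hC' hlt.le).1 hsplit)

lemma concatP_inj_of_atomicP (hB : AtomicP k B) (hC : IsSetPartition m C)
    (hB' : AtomicP k' B') (hC' : IsSetPartition m' C') (hn : k + m = k' + m')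
    (h : concatP k B C = concatP k' B' C') : k = k' ∧ B = B' ∧ m = m' ∧ C = C' := by
  obtain rfl : k = k' :=
    le_antisymm (le_of_concatP_eq hB'.1 hB'.2.1 hC' hB hC h.symm)
      (le_of_concatP_eq hB.1 hB.2.1 hC hB' hC' h)
  obtain rfl : m = m' := by omega
  obtain ⟨rfl, rfl⟩ := concatP_inj hB.1 hB'.1 hC hC' h
  exact ⟨rfl, rfl, rfl, rfl⟩

lemma atomicFactorization_nil_iff : AtomicFactorization n A [] ↔ n = 0 ∧ A = ∅ := by
  simp [AtomicFactorization, concatListP, eq_comm]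

lemma atomicFactorization_cons_iff :
    AtomicFactorization n A ((k, B) :: L) ↔
      AtomicP k B ∧ ∃ m C, AtomicFactorization m C L ∧ n = k + m ∧ A = concatP k B C := by
  simp only [AtomicFactorization, List.forall_mem_cons, concatListP, Prod.ext_iff]
  constructor
  · rintro ⟨⟨hB, hL⟩, hn, hA⟩
    exact ⟨hB, _, _, ⟨hL, rfl, rfl⟩, by omega, hA.symm⟩
  · rintro ⟨hB, m, C, ⟨hL, rfl, rfl⟩, rfl, rfl⟩
    exact ⟨⟨hB, hL⟩, by omega, rfl⟩

lemma AtomicFactorization.isSetPartition (h : AtomicFactorization n A L) :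
    IsSetPartition n A := by
  induction L generalizing n A with
  | nil =>
    obtain ⟨rfl, rfl⟩ := atomicFactorization_nil_iff.1 h
    exact isPartitionOf_empty_iff.2 rfl
  | cons p L ih =>
    obtain ⟨hB, m, C, hL, rfl, rfl⟩ := atomicFactorization_cons_iff.1 h
    exact isSetPartition_concatP hB.1 (ih hL)

lemma AtomicFactorization.eq_nil_of_zero (h : AtomicFactorization 0 A L) : L = [] := by
  rcases L with _ | ⟨⟨k, B⟩, L⟩
  · rfl
  · obtain ⟨hB, m, C, -, hn, -⟩ := atomicFactorization_cons_iff.1 h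
    have := hB.2.1
    omega

lemma AtomicFactorization.unique (h₁ : AtomicFactorization n A L₁)
    (h₂ : AtomicFactorization n A L₂) : L₁ = L₂ := by
  induction L₁ generalizing n A L₂ with
  | nil =>
    obtain ⟨rfl, rfl⟩ := atomicFactorization_nil_iff.1 h₁
    exact h₂.eq_nil_of_zero.symm
  | cons p L₁ ih =>
    rcases L₂ with _ | ⟨⟨k', B'⟩, L₂⟩
    · obtain ⟨rfl, -⟩ := atomicFactorization_nil_iff.1 h₂
      exact h₁.eq_nil_of_zero
    obtain ⟨hB, m, C, hL₁, rfl, rfl⟩ := atomicFactorization_cons_iff.1 h₁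
    obtain ⟨hB', m', C', hL₂, hn, hA⟩ := atomicFactorization_cons_iff.1 h₂
    obtain ⟨rfl, rfl, rfl, rfl⟩ :=
      concatP_inj_of_atomicP hB hL₁.isSetPartition hB' hL₂.isSetPartition hn hA
    rw [ih hL₁ hL₂]

lemma exists_atomicFactorization (hA : IsSetPartition n A) :
    ∃ L, AtomicFactorization n A L := by
  induction n using Nat.strong_induction_on generalizing A with
  | _ n ih =>
  rcases Nat.eq_zero_or_pos n with rfl | hn
  · exact ⟨[], atomicFactorization_nil_iff.2 ⟨rfl, isPartitionOf_empty_iff.1 hA⟩⟩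
  obtain ⟨k, ⟨hk, hkA⟩, hmin⟩ :
      ∃ k, (0 < k ∧ IsSplitPoint k A) ∧ ∀ j < k, ¬ (0 < j ∧ IsSplitPoint j A) :=
    have hsplit : ∃ k, 0 < k ∧ IsSplitPoint k A :=
      ⟨n, hn, isSplitPoint_of_isSetPartition hA⟩
    ⟨Nat.find hsplit, Nat.find_spec hsplit, fun _ => Nat.find_min hsplit⟩
  have hkn : k ≤ n := not_lt.1 fun hnk => hmin n hnk ⟨hn, isSplitPoint_of_isSetPartition hA⟩
  obtain ⟨B, C, hB, hC, rfl⟩ := exists_eq_concatP_of_isSplitPoint hA hkA hkn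
  have hBatom : AtomicP k B := atomicP_iff.2 ⟨hB, hk, fun j hj hjk hjB =>
    hmin j hjk ⟨hj, (isSplitPoint_concatP_iff hC hjk.le).2 hjB⟩⟩
  obtain ⟨L, hL⟩ := ih _ (by omega) hC
  exact ⟨_ :: L, atomicFactorization_cons_iff.2 ⟨hBatom, _, _, hL, by omega, rfl⟩⟩

end SetPartition

/-- every set partition of `[n]` admits a unique factorization into
atomic set partitions under shifted concatenation. -/
theorem unique_atomic_factorization (n : ℕ) (A : Finset (Finset ℕ))
    (hA : IsSetPartition n A) :
    ∃! L : List (ℕ × Finset (Finset ℕ)), AtomicFactorization n A L := by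
  obtain ⟨L, hL⟩ := exists_atomicFactorization hA
  exact ⟨L, hL, fun _ hL' => hL'.unique hL⟩

end
end

section
/- If a_k denotes the number of atomic set partitions of size k and B_n the n-th Bell number, then as formal power series in q: 1/(1 - \sum_{k\ge 1} a_k q^k) = \sum_{n\ge 0} B_n q^n. -/
open scoped Classical
noncomputable section

/-! ### Auxiliary development -/

lemma mem_ground' {n x : ℕ} : x ∈ ground n ↔ 1 ≤ x ∧ x ≤ n := Finset.mem_Icc

lemma part_subset' {n : ℕ} {A : Finset (Finset ℕ)} (h : IsSetPartition n A)
    {B : Finset ℕ} (hB : B ∈ A) : B ⊆ ground n := by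
  have := Finset.le_sup (f := id) hB
  rwa [h.2.2] at this

lemma exists_part' {n : ℕ} {A : Finset (Finset ℕ)} (h : IsSetPartition n A)
    {x : ℕ} (hx : x ∈ ground n) : ∃ B ∈ A, x ∈ B := by
  rw [← h.2.2] at hx
  exact Finset.mem_sup.mp hx

/-- A split point of a set partition. -/
def splitAt (k : ℕ) (A : Finset (Finset ℕ)) : Prop :=
  ∀ B ∈ A, (∀ x ∈ B, x ≤ k) ∨ (∀ x ∈ B, k < x)

def lowerPart (k : ℕ) (A : Finset (Finset ℕ)) : Finset (Finset ℕ) :=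
  A.filter fun B => ∀ x ∈ B, x ≤ k

def upperPart (k : ℕ) (A : Finset (Finset ℕ)) : Finset (Finset ℕ) :=
  (A.filter fun B => ¬ ∀ x ∈ B, x ≤ k).image fun B => B.image (· - k)

def minSplit (A : Finset (Finset ℕ)) : ℕ :=
  if h : ∃ k, 0 < k ∧ splitAt k A then Nat.find h else 0

lemma splitAt_top {n : ℕ} {A : Finset (Finset ℕ)} (h : IsSetPartition n A) :
    splitAt n A := by
  intro B hB
  exact Or.inl fun x hx => (mem_ground'.mp (part_subset' h hB hx)).2
lemma shiftP_elem_bound {k m : ℕ} {C : Finset (Finset ℕ)} (hC : IsSetPartition m C)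
    {D : Finset ℕ} (hD : D ∈ shiftP k C) {x : ℕ} (hx : x ∈ D) :
    k + 1 ≤ x ∧ x ≤ k + m := by
  obtain ⟨c, hc, rfl⟩ := Finset.mem_image.mp hD
  obtain ⟨y, hy, rfl⟩ := Finset.mem_image.mp hx
  have := mem_ground'.mp (part_subset' hC hc hy)
  omega

lemma isSetPartition_concat {k m : ℕ} {B C : Finset (Finset ℕ)}
    (hB : IsSetPartition k B) (hC : IsSetPartition m C) :
    IsSetPartition (k + m) (concatP k B C) := by
  have hBe : ∀ b ∈ B, ∀ x ∈ b, 1 ≤ x ∧ x ≤ k := fun b hb x hx =>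
    mem_ground'.mp (part_subset' hB hb hx)
  refine ⟨?_, ?_, ?_⟩
  · intro D hD
    rcases Finset.mem_union.mp hD with h | h
    · exact hB.1 _ h
    · obtain ⟨c, hc, rfl⟩ := Finset.mem_image.mp h
      exact (hC.1 _ hc).image _
  · intro D₁ h₁ D₂ h₂ hne
    rw [Finset.disjoint_left]
    intro x hx₁ hx₂
    rcases Finset.mem_union.mp h₁ with g₁ | g₁ <;> rcases Finset.mem_union.mp h₂ with g₂ | g₂
    · exact Finset.disjoint_left.mp (hB.2.1 _ g₁ _ g₂ hne) hx₁ hx₂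
    · have := (hBe _ g₁ _ hx₁).2
      have := (shiftP_elem_bound hC g₂ hx₂).1
      omega
    · have := (hBe _ g₂ _ hx₂).2
      have := (shiftP_elem_bound hC g₁ hx₁).1
      omega
    · obtain ⟨c₁, hc₁, rfl⟩ := Finset.mem_image.mp g₁
      obtain ⟨c₂, hc₂, rfl⟩ := Finset.mem_image.mp g₂
      have hcne : c₁ ≠ c₂ := fun h => hne (by rw [h])
      obtain ⟨y₁, hy₁, he₁⟩ := Finset.mem_image.mp hx₁
      obtain ⟨y₂, hy₂, he₂⟩ := Finset.mem_image.mp hx₂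
      have : y₁ = y₂ := by omega
      subst this
      exact Finset.disjoint_left.mp (hC.2.1 _ hc₁ _ hc₂ hcne) hy₁ hy₂
  · ext x
    rw [Finset.mem_sup, mem_ground']
    constructor
    · rintro ⟨D, hD, hx⟩
      rcases Finset.mem_union.mp hD with g | g
      · have := hBe _ g _ hx; omega
      · have := shiftP_elem_bound hC g hx; omega
    · rintro ⟨h1, h2⟩
      by_cases hxk : x ≤ k
      · obtain ⟨b, hb, hxb⟩ := exists_part' hB (mem_ground'.mpr ⟨h1, hxk⟩)
        exact ⟨b, Finset.mem_union_left _ hb, hxb⟩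
      · obtain ⟨c, hc, hxc⟩ := exists_part' hC (mem_ground'.mpr (by omega : 1 ≤ x - k ∧ x - k ≤ m))
        refine ⟨c.image (· + k), Finset.mem_union_right _ (Finset.mem_image_of_mem _ hc), ?_⟩
        exact Finset.mem_image.mpr ⟨x - k, hxc, by omega⟩

/-- L5: a split point yields a decomposition. -/
lemma split_decomp {n k : ℕ} {A : Finset (Finset ℕ)} (hA : IsSetPartition n A)
    (hk : k ≤ n) (hs : splitAt k A) :
    IsSetPartition k (lowerPart k A) ∧ IsSetPartition (n - k) (upperPart k A) ∧
      A = concatP k (lowerPart k A) (upperPart k A) := by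
  have hAe : ∀ b ∈ A, ∀ x ∈ b, 1 ≤ x ∧ x ≤ n := fun b hb x hx =>
    mem_ground'.mp (part_subset' hA hb hx)
  have hup : ∀ b ∈ A, ¬ (∀ x ∈ b, x ≤ k) → ∀ x ∈ b, k < x := by
    intro b hb hnb
    rcases hs b hb with h | h
    · exact absurd h hnb
    · exact h
  have hlow : IsSetPartition k (lowerPart k A) := by
    refine ⟨?_, ?_, ?_⟩
    · intro b hb; exact hA.1 _ (Finset.mem_filter.mp hb).1
    · intro b hb c hc hne
      exact hA.2.1 _ (Finset.mem_filter.mp hb).1 _ (Finset.mem_filter.mp hc).1 hne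
    · ext x
      rw [Finset.mem_sup, mem_ground']
      constructor
      · rintro ⟨b, hb, hx⟩
        obtain ⟨hb, hble⟩ := Finset.mem_filter.mp hb
        exact ⟨(hAe _ hb _ hx).1, hble _ hx⟩
      · rintro ⟨h1, h2⟩
        obtain ⟨b, hb, hxb⟩ := exists_part' hA (mem_ground'.mpr ⟨h1, by omega⟩)
        rcases hs b hb with h | h
        · exact ⟨b, Finset.mem_filter.mpr ⟨hb, h⟩, hxb⟩
        · exact absurd (h _ hxb) (by omega)
  have hupp : IsSetPartition (n - k) (upperPart k A) := by
    refine ⟨?_, ?_, ?_⟩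
    · intro D hD
      obtain ⟨b, hb, rfl⟩ := Finset.mem_image.mp hD
      exact (hA.1 _ (Finset.mem_filter.mp hb).1).image _
    · intro D₁ h₁ D₂ h₂ hne
      obtain ⟨b₁, hb₁, rfl⟩ := Finset.mem_image.mp h₁
      obtain ⟨b₂, hb₂, rfl⟩ := Finset.mem_image.mp h₂
      obtain ⟨hb₁A, hb₁p⟩ := Finset.mem_filter.mp hb₁
      obtain ⟨hb₂A, hb₂p⟩ := Finset.mem_filter.mp hb₂
      have hbne : b₁ ≠ b₂ := fun h => hne (by rw [h])
      rw [Finset.disjoint_left]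
      intro x hx₁ hx₂
      obtain ⟨y₁, hy₁, he₁⟩ := Finset.mem_image.mp hx₁
      obtain ⟨y₂, hy₂, he₂⟩ := Finset.mem_image.mp hx₂
      have g₁ := hup _ hb₁A hb₁p _ hy₁
      have g₂ := hup _ hb₂A hb₂p _ hy₂
      have : y₁ = y₂ := by omega
      subst this
      exact Finset.disjoint_left.mp (hA.2.1 _ hb₁A _ hb₂A hbne) hy₁ hy₂
    · ext x
      rw [Finset.mem_sup, mem_ground']
      constructor
      · rintro ⟨D, hD, hx⟩
        obtain ⟨b, hb, rfl⟩ := Finset.mem_image.mp hD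
        obtain ⟨hbA, hbp⟩ := Finset.mem_filter.mp hb
        obtain ⟨y, hy, rfl⟩ := Finset.mem_image.mp hx
        have := hup _ hbA hbp _ hy
        have := hAe _ hbA _ hy
        omega
      · rintro ⟨h1, h2⟩
        obtain ⟨b, hb, hxb⟩ := exists_part' hA (mem_ground'.mpr (by omega : 1 ≤ x + k ∧ x + k ≤ n))
        have hbp : ¬ ∀ y ∈ b, y ≤ k := fun h => by have := h _ hxb; omega
        refine ⟨b.image (· - k), Finset.mem_image_of_mem _ (Finset.mem_filter.mpr ⟨hb, hbp⟩), ?_⟩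
        exact Finset.mem_image.mpr ⟨x + k, hxb, by omega⟩
  refine ⟨hlow, hupp, ?_⟩
  ext D
  constructor
  · intro hD
    rcases hs D hD with h | h
    · exact Finset.mem_union_left _ (Finset.mem_filter.mpr ⟨hD, h⟩)
    · refine Finset.mem_union_right _ ?_
      have hDp : ¬ ∀ x ∈ D, x ≤ k := by
        obtain ⟨x, hx⟩ := hA.1 _ hD
        intro hc; have := hc _ hx; have := h _ hx; omega
      refine Finset.mem_image.mpr ⟨D.image (· - k),
        Finset.mem_image_of_mem _ (Finset.mem_filter.mpr ⟨hD, hDp⟩), ?_⟩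
      rw [Finset.image_image]
      conv_rhs => rw [← Finset.image_id (s := D)]
      apply Finset.image_congr
      intro x hx
      have := h _ hx
      simp; omega
  · intro hD
    rcases Finset.mem_union.mp hD with h | h
    · exact (Finset.mem_filter.mp h).1
    · obtain ⟨E, hE, rfl⟩ := Finset.mem_image.mp h
      obtain ⟨b, hb, rfl⟩ := Finset.mem_image.mp hE
      obtain ⟨hbA, hbp⟩ := Finset.mem_filter.mp hb
      have : (b.image (· - k)).image (· + k) = b := by
        rw [Finset.image_image]
        conv_rhs => rw [← Finset.image_id (s := b)]
        apply Finset.image_congr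
        intro x hx
        have := hup _ hbA hbp _ hx
        simp; omega
      rw [this]; exact hbA
/-- L6: recovering the factors of a concatenation. -/
lemma concat_recover {k m : ℕ} {B C : Finset (Finset ℕ)}
    (hB : IsSetPartition k B) (hC : IsSetPartition m C) :
    lowerPart k (concatP k B C) = B ∧ upperPart k (concatP k B C) = C ∧
      splitAt k (concatP k B C) := by
  have hBe : ∀ b ∈ B, ∀ x ∈ b, x ≤ k := fun b hb x hx =>
    (mem_ground'.mp (part_subset' hB hb hx)).2
  have hsh : ∀ D ∈ shiftP k C, ¬ ∀ x ∈ D, x ≤ k := by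
    intro D hD hall
    obtain ⟨c, hc, rfl⟩ := Finset.mem_image.mp hD
    obtain ⟨y, hy⟩ := hC.1 _ hc
    have h1 := (mem_ground'.mp (part_subset' hC hc hy)).1
    have := hall (y + k) (Finset.mem_image_of_mem _ hy)
    omega
  have hfilter : (concatP k B C).filter (fun D => ¬ ∀ x ∈ D, x ≤ k) = shiftP k C := by
    ext D
    rw [Finset.mem_filter]
    constructor
    · rintro ⟨hD, hp⟩
      rcases Finset.mem_union.mp hD with h | h
      · exact absurd (hBe _ h) hp
      · exact h
    · intro h
      exact ⟨Finset.mem_union_right _ h, hsh _ h⟩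
  refine ⟨?_, ?_, ?_⟩
  · ext D
    rw [lowerPart, Finset.mem_filter]
    constructor
    · rintro ⟨hD, hp⟩
      rcases Finset.mem_union.mp hD with h | h
      · exact h
      · exact absurd hp (hsh _ h)
    · intro h
      exact ⟨Finset.mem_union_left _ h, hBe _ h⟩
  · rw [upperPart, hfilter, shiftP, Finset.image_image]
    conv_rhs => rw [← Finset.image_id (s := C)]
    apply Finset.image_congr
    intro c _
    simp only [Function.comp, id]
    rw [Finset.image_image]
    conv_rhs => rw [← Finset.image_id (s := c)]
    apply Finset.image_congr
    intro x _
    simp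
  · intro D hD
    rcases Finset.mem_union.mp hD with h | h
    · exact Or.inl (hBe _ h)
    · refine Or.inr fun x hx => ?_
      obtain ⟨c, hc, rfl⟩ := Finset.mem_image.mp h
      obtain ⟨y, hy, rfl⟩ := Finset.mem_image.mp hx
      have := (mem_ground'.mp (part_subset' hC hc hy)).1
      omega

lemma exists_split {n : ℕ} {A : Finset (Finset ℕ)} (hn : 0 < n) (hA : IsSetPartition n A) :
    ∃ k, 0 < k ∧ splitAt k A := ⟨n, hn, splitAt_top hA⟩

lemma minSplit_spec {n : ℕ} {A : Finset (Finset ℕ)} (hn : 0 < n) (hA : IsSetPartition n A) :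
    0 < minSplit A ∧ splitAt (minSplit A) A ∧ minSplit A ≤ n ∧
      ∀ j, 0 < j → splitAt j A → minSplit A ≤ j := by
  have h := exists_split hn hA
  rw [minSplit, dif_pos h]
  have hspec := Nat.find_spec h
  refine ⟨hspec.1, hspec.2, Nat.find_le ⟨hn, splitAt_top hA⟩, fun j hj hs => Nat.find_le ⟨hj, hs⟩⟩

/-- L8: the lower part at the minimal split point is atomic. -/
lemma minSplit_atomic {n : ℕ} {A : Finset (Finset ℕ)} (hn : 0 < n) (hA : IsSetPartition n A) :
    AtomicP (minSplit A) (lowerPart (minSplit A) A) := by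
  obtain ⟨hpos, hsplit, hle, hmin⟩ := minSplit_spec hn hA
  set k := minSplit A with hk
  obtain ⟨hlow, _, _⟩ := split_decomp hA hle hsplit
  refine ⟨hlow, hpos, ?_⟩
  rintro ⟨j, B', C', hj, hjk, hB', hC', heq⟩
  -- lowerPart splits at j, hence A splits at j, contradicting minimality
  have hsj : splitAt j (lowerPart k A) := by
    rw [heq]
    exact (concat_recover hB' hC').2.2
  have hsA : splitAt j A := by
    intro D hD
    rcases hsplit D hD with h | h
    · exact hsj D (Finset.mem_filter.mpr ⟨hD, h⟩)
    · exact Or.inr fun x hx => by have := h x hx; omega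
  have := hmin j hj hsA
  omega

/-- L9: a decomposition with atomic first factor determines the minimal split point. -/
lemma concat_minSplit {n k : ℕ} {B C : Finset (Finset ℕ)}
    (hk : 0 < k) (hkn : k ≤ n) (hB : AtomicP k B) (hC : IsSetPartition (n - k) C) :
    minSplit (concatP k B C) = k := by
  have hpart : IsSetPartition n (concatP k B C) := by
    have := isSetPartition_concat hB.1 hC
    rwa [Nat.add_sub_cancel' hkn] at this
  obtain ⟨hpos, hsplit, hle, hmin⟩ := minSplit_spec (lt_of_lt_of_le hk hkn) hpart
  obtain ⟨hrl, hru, hrs⟩ := concat_recover hB.1 hC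
  have h1 : minSplit (concatP k B C) ≤ k := hmin k hk hrs
  rcases lt_or_eq_of_le h1 with hlt | heq
  · exfalso
    set j := minSplit (concatP k B C) with hj
    -- B splits at j
    have hsB : splitAt j B := fun D hD => hsplit D (Finset.mem_union_left _ hD)
    obtain ⟨hl, hu, hd⟩ := split_decomp hB.1 (le_of_lt hlt) hsB
    exact hB.2.2 ⟨j, lowerPart j B, upperPart j B, hpos, hlt, hl, hu, hd⟩
  · exact heq
def PF (n : ℕ) : Finset (Finset (Finset ℕ)) :=
  (ground n).powerset.powerset.filter fun A => IsSetPartition n A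

def AF (n : ℕ) : Finset (Finset (Finset ℕ)) :=
  (ground n).powerset.powerset.filter fun A => AtomicP n A

lemma mem_PF {n : ℕ} {A : Finset (Finset ℕ)} : A ∈ PF n ↔ IsSetPartition n A := by
  rw [PF, Finset.mem_filter]
  refine ⟨fun h => h.2, fun h => ⟨?_, h⟩⟩
  rw [Finset.mem_powerset]
  intro B hB
  rw [Finset.mem_powerset]
  exact part_subset' h hB

lemma mem_AF {n : ℕ} {A : Finset (Finset ℕ)} : A ∈ AF n ↔ AtomicP n A := by
  rw [AF, Finset.mem_filter]
  refine ⟨fun h => h.2, fun h => ⟨?_, h⟩⟩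
  rw [Finset.mem_powerset]
  intro B hB
  rw [Finset.mem_powerset]
  exact part_subset' h.1 hB

lemma bell_eq_card (n : ℕ) : bell n = (PF n).card := by
  rw [bell, Nat.card_congr (Equiv.subtypeEquivRight fun A => mem_PF.symm),
    Nat.card_eq_fintype_card, Fintype.card_coe]

lemma atomCount'_eq_card (n : ℕ) : atomCount' n = (AF n).card := by
  rw [atomCount', Nat.card_congr (Equiv.subtypeEquivRight fun A => mem_AF.symm),
    Nat.card_eq_fintype_card, Fintype.card_coe]

lemma PF_zero : PF 0 = {∅} := by
  ext A
  rw [mem_PF, Finset.mem_singleton]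
  constructor
  · intro h
    by_contra hne
    obtain ⟨B, hB⟩ := Finset.nonempty_iff_ne_empty.mpr hne
    obtain ⟨x, hx⟩ := h.1 _ hB
    have := mem_ground'.mp (part_subset' h hB hx)
    omega
  · rintro rfl
    exact ⟨fun B hB => absurd hB (Finset.notMem_empty _),
      fun B hB => absurd hB (Finset.notMem_empty _), by simp [ground]⟩

lemma bell_zero : bell 0 = 1 := by rw [bell_eq_card, PF_zero, Finset.card_singleton]

/-- The key recurrence. -/
lemma bell_recurrence {n : ℕ} (hn : 0 < n) :
    bell n = ∑ k ∈ Finset.Icc 1 n, atomCount' k * bell (n - k) := by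
  have : ∑ k ∈ Finset.Icc 1 n, atomCount' k * bell (n - k)
      = ((Finset.Icc 1 n).sigma fun k => AF k ×ˢ PF (n - k)).card := by
    rw [Finset.card_sigma]
    exact Finset.sum_congr rfl fun k _ => by
      rw [Finset.card_product, atomCount'_eq_card, bell_eq_card]
  rw [this, bell_eq_card]
  refine Finset.card_bij'
    (fun A _ => ⟨minSplit A, (lowerPart (minSplit A) A, upperPart (minSplit A) A)⟩)
    (fun p _ => concatP p.1 p.2.1 p.2.2) ?_ ?_ ?_ ?_
  · intro A hA
    have hA' := mem_PF.mp hA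
    obtain ⟨hpos, hsplit, hle, _⟩ := minSplit_spec hn hA'
    obtain ⟨hl, hu, _⟩ := split_decomp hA' hle hsplit
    rw [Finset.mem_sigma, Finset.mem_product]
    exact ⟨Finset.mem_Icc.mpr ⟨hpos, hle⟩, mem_AF.mpr (minSplit_atomic hn hA'), mem_PF.mpr hu⟩
  · rintro ⟨k, B, C⟩ hp
    rw [Finset.mem_sigma, Finset.mem_product] at hp
    obtain ⟨hk, hB, hC⟩ := hp
    rw [Finset.mem_Icc] at hk
    have := isSetPartition_concat (mem_AF.mp hB).1 (mem_PF.mp hC)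
    rw [Nat.add_sub_cancel' hk.2] at this
    exact mem_PF.mpr this
  · intro A hA
    have hA' := mem_PF.mp hA
    obtain ⟨hpos, hsplit, hle, _⟩ := minSplit_spec hn hA'
    obtain ⟨_, _, hd⟩ := split_decomp hA' hle hsplit
    exact hd.symm
  · rintro ⟨k, B, C⟩ hp
    rw [Finset.mem_sigma, Finset.mem_product] at hp
    obtain ⟨hk, hB, hC⟩ := hp
    rw [Finset.mem_Icc] at hk
    have hB' := mem_AF.mp hB
    have hC' := mem_PF.mp hC
    have hms : minSplit (concatP k B C) = k := concat_minSplit hk.1 hk.2 hB' hC'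
    obtain ⟨hrl, hru, _⟩ := concat_recover hB'.1 hC'
    simp only [hms]
    rw [hrl, hru]
/-- `1/(1 - ∑_{k ≥ 1} a_k q^k) = ∑_{n ≥ 0} B_n q^n`, i.e. the two series
multiply to `1`. -/
theorem atomic_bell_generating_function :
    (1 - PowerSeries.mk fun k => if k = 0 then (0 : ℚ) else (atomCount' k : ℚ)) *
      PowerSeries.mk (fun n => (bell n : ℚ)) = 1 := by
  ext n
  rw [sub_mul, one_mul, map_sub, PowerSeries.coeff_mk, PowerSeries.coeff_mul]
  simp only [PowerSeries.coeff_mk]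
  rw [Finset.Nat.sum_antidiagonal_eq_sum_range_succ_mk]
  rcases Nat.eq_zero_or_pos n with rfl | hn
  · simp [bell_zero]
  · rw [PowerSeries.coeff_one, if_neg hn.ne', sub_eq_zero]
    have hsub : Finset.Icc 1 n ⊆ Finset.range (n + 1) := fun k hk => by
      rw [Finset.mem_Icc] at hk; exact Finset.mem_range.mpr (by omega)
    have h1 : ∑ k ∈ Finset.Icc 1 n,
          (if k = 0 then (0 : ℚ) else (atomCount' k : ℚ)) * (bell (n - k) : ℚ)
        = ∑ k ∈ Finset.range (n + 1),
          (if k = 0 then (0 : ℚ) else (atomCount' k : ℚ)) * (bell (n - k) : ℚ) :=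
      Finset.sum_subset hsub fun k hk hk' => by
        rw [Finset.mem_Icc] at hk'
        rw [Finset.mem_range] at hk
        have : k = 0 := by omega
        simp [this]
    rw [← h1, bell_recurrence hn]
    push_cast
    exact Finset.sum_congr rfl fun k hk => by
      rw [Finset.mem_Icc] at hk
      rw [if_neg (by omega)]

end
end

section
/- Every word w over a totally ordered alphabet has a unique factorization w = w^{(1)} w^{(2)} ··· w^{(d)} as a concatenation of Lyndon words with w^{(1)} ≥_lex w^{(2)} ≥_lex ··· ≥_lex w^{(d)}. -/
open scoped Classical
noncomputable section

/-!
Both halves rest on the characterization of Lyndon words as the nonempty words strictly smaller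
than each of their proper suffixes.

Existence: prepend the letters of `w` one at a time to a factorization of the rest, merging the
new first factor `u` with the next factor `v` as long as `u < v`; this is possible because the
concatenation of Lyndon words `u < v` is again Lyndon.

Uniqueness: in a factorization `u₁ ≥ u₂ ≥ ⋯`, no Lyndon prefix `p` of the word is longer than
`u₁`. Otherwise `p` ends in a nonempty proper suffix `s` that is a prefix of some `uⱼ`, and
`p < s ≤ uⱼ ≤ u₁ < p`. Hence the first factors of two factorizations have the same length.
-/

namespace List

variable {α : Type*} [LinearOrder α]

theorem lt_append_of_ne_nil (u : List α) {t : List α} (ht : t ≠ []) : u < u ++ t := by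
  induction u with
  | nil => obtain ⟨a, t, rfl⟩ := exists_cons_of_ne_nil ht; exact Lex.nil
  | cons a u ih => exact Lex.cons ih

theorem lt_of_append_lt_append_left {c u v : List α} (h : c ++ u < c ++ v) : u < v := by
  induction c with
  | nil => exact h
  | cons a c ih =>
    cases h with
    | rel h => exact absurd h (lt_irrefl a)
    | cons h => exact ih h

theorem isPrefix_or_append_lt_append_of_lt {u v : List α} (h : u < v) :
    u <+: v ∨ ∀ x y : List α, u ++ x < v ++ y := by
  induction h with
  | nil => exact .inl nil_prefix
  | rel h => exact .inr fun _ _ => Lex.rel h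
  | cons _ ih => exact ih.imp (cons_prefix_cons.mpr ⟨rfl, ·⟩) fun h x y => Lex.cons (h x y)

theorem append_lt_append_of_lt_of_length_le {u v : List α} (h : u < v)
    (hl : v.length ≤ u.length) (x y : List α) : u ++ x < v ++ y :=
  (isPrefix_or_append_lt_append_of_lt h).resolve_left
    (fun hp => h.ne (hp.eq_of_length (le_antisymm hp.length_le hl))) x y

theorem exists_suffix_le_of_isPrefix_flatten {u r : List α} {L : List (List α)}
    (hL : ∀ v ∈ L, v ≤ u) (hr : r ≠ []) (h : r <+: L.flatten) :
    ∃ s, s ≠ [] ∧ s <:+ r ∧ s ≤ u := by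
  induction L generalizing r with
  | nil => exact absurd (prefix_nil.mp h) hr
  | cons v T ih =>
    rw [flatten_cons] at h
    rcases le_or_gt r.length v.length with hle | hlt
    · have hrv : r <+: v := prefix_of_prefix_length_le h (prefix_append v _) hle
      exact ⟨r, hr, suffix_refl r, (not_lt.mp hrv.le).trans (hL v mem_cons_self)⟩
    · obtain ⟨r', rfl⟩ := prefix_of_prefix_length_le (prefix_append v _) h hlt.le
      have hr' : r' ≠ [] := by rintro rfl; simp at hlt
      obtain ⟨s, hs, hsr, hsu⟩ :=
        ih (fun x hx => hL x (mem_cons_of_mem v hx)) hr' ((prefix_append_right_inj v).mp h)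
      exact ⟨s, hs, hsr.trans (suffix_append v r'), hsu⟩

end List

namespace LyndonWord

open List

variable {α : Type*}

theorem iff_lex_swap {lt : α → α → Prop} {w : List α} :
    LyndonWord lt w ↔
      w ≠ [] ∧ ∀ p s, w = p ++ s → p ≠ [] → s ≠ [] → Lex lt w (s ++ p) := by
  refine and_congr_right fun hw => ⟨fun h p s hps hp hs => ?_, fun h i hi hiw => ?_⟩
  · subst hps
    simpa only [rotate_append_length_eq] using
      h p.length (length_pos_iff.mpr hp) (by simp [length_pos_iff.mpr hs])
  · rw [rotate_eq_drop_append_take hiw.le]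
    exact h _ _ (take_append_drop i w).symm (by simp [hi.ne', hw])
      (by simp [hiw])

variable [LinearOrder α] {w : List α}

theorem iff_lt_suffix :
    LyndonWord (· < ·) w ↔ w ≠ [] ∧ ∀ p s, w = p ++ s → p ≠ [] → s ≠ [] → w < s := by
  rw [iff_lex_swap]
  refine and_congr_right fun _ => ⟨fun h p s hps hp hs => ?_, fun h p s hps hp hs => ?_⟩
  · have hrot : w < s ++ p := h p s hps hp hs
    have hlen : s.length < w.length := by simp [hps, length_pos_iff.mpr hp]
    by_contra hsw
    have hsw : s < w := lt_of_le_of_ne (not_lt.mp hsw) (by rintro rfl; omega)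
    -- If `w = s ++ t`, the rotation `s ++ p` exceeds `w = s ++ t`, so `t < p`, and then the
    -- rotation `t ++ s` lies below `p ++ s = w`.
    rcases isPrefix_or_append_lt_append_of_lt hsw with ⟨t, hst⟩ | hlt
    · have hlen_tp : t.length = p.length := by
        have := congrArg length (hst.trans hps); simp at this; omega
      have hrot' : w < t ++ s := h s t hst.symm hs (ne_nil_of_length_pos (by
        rw [hlen_tp]; exact length_pos_iff.mpr hp))
      have htp : t < p := lt_of_append_lt_append_left (c := s) (hst ▸ hrot)
      exact lt_asymm hrot' (hps ▸ append_lt_append_of_lt_of_length_le htp hlen_tp.ge s s)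
    · exact lt_asymm hrot (by simpa using hlt p [])
  · have hlen : s.length ≤ w.length := by simp [hps]
    simpa using append_lt_append_of_lt_of_length_le (h p s hps hp hs) hlen [] p

theorem singleton (a : α) : LyndonWord (· < ·) [a] :=
  ⟨cons_ne_nil a [], fun i hi hi1 => absurd hi1 (by simp; omega)⟩

theorem lt_of_eq_append {p s : List α} (hw : LyndonWord (· < ·) w) (h : w = p ++ s)
    (hp : p ≠ []) (hs : s ≠ []) : w < s :=
  (iff_lt_suffix.mp hw).2 p s h hp hs

theorem append_lt_of_lt {u v : List α} (hv : LyndonWord (· < ·) v) (hu : u ≠ []) (h : u < v) :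
    u ++ v < v := by
  rcases isPrefix_or_append_lt_append_of_lt h with ⟨t, rfl⟩ | hlt
  · have ht : t ≠ [] := by rintro rfl; simp at h
    exact append_left_lt (hv.lt_of_eq_append rfl hu ht)
  · simpa using hlt v []

theorem append {u v : List α} (hu : LyndonWord (· < ·) u) (hv : LyndonWord (· < ·) v)
    (h : u < v) : LyndonWord (· < ·) (u ++ v) := by
  have huv := append_lt_of_lt hv hu.1 h
  refine iff_lt_suffix.mpr ⟨by simp [hu.1], fun p s hps hp hs => ?_⟩
  rcases append_eq_append_iff.mp hps with ⟨a, rfl, hva⟩ | ⟨c, hupc, rfl⟩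
  · rcases eq_or_ne a [] with rfl | ha
    · simpa [hva] using huv
    · exact huv.trans (hv.lt_of_eq_append hva ha hs)
  · rcases eq_or_ne c [] with rfl | hc
    · simpa [hupc] using huv
    · exact append_lt_append_of_lt_of_length_le (hu.lt_of_eq_append hupc hp hc)
        (by simp [hupc]) v v

theorem length_le_of_isPrefix_append_flatten {p u : List α} {L : List (List α)}
    (hp : LyndonWord (· < ·) p) (hu : u ≠ []) (hL : ∀ v ∈ L, v ≤ u)
    (h : p <+: u ++ L.flatten) : p.length ≤ u.length := by
  by_contra! hlt
  obtain ⟨r, rfl⟩ := prefix_of_prefix_length_le (prefix_append u _) h hlt.le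
  have hr : r ≠ [] := by rintro rfl; simp at hlt
  obtain ⟨s, hs, ⟨q, rfl⟩, hsu⟩ :=
    exists_suffix_le_of_isPrefix_flatten hL hr ((prefix_append_right_inj u).mp h)
  have hps : u ++ (q ++ s) < s := hp.lt_of_eq_append (p := u ++ q) (by simp) (by simp [hu]) hs
  exact lt_irrefl _ ((hps.trans_le hsu).trans (lt_append_of_ne_nil u (by simp [hs])))

end LyndonWord

section Factorization

open List

variable {α : Type*} [LinearOrder α]

def IsLyndonFactorization (L : List (List α)) : Prop :=
  (∀ u ∈ L, LyndonWord (· < ·) u) ∧ L.IsChain (· ≥ ·)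

theorem IsLyndonFactorization.of_cons {u : List α} {L : List (List α)}
    (h : IsLyndonFactorization (u :: L)) : IsLyndonFactorization L :=
  ⟨fun v hv => h.1 v (mem_cons_of_mem u hv), h.2.tail⟩

theorem IsLyndonFactorization.le_head {u : List α} {L : List (List α)}
    (h : IsLyndonFactorization (u :: L)) : ∀ v ∈ L, v ≤ u :=
  (pairwise_cons.mp (isChain_iff_pairwise.mp h.2)).1

theorem IsLyndonFactorization.eq_nil_of_flatten_eq_nil {L : List (List α)}
    (h : IsLyndonFactorization L) (hL : L.flatten = []) : L = [] :=
  eq_nil_iff_forall_not_mem.mpr fun u hu => (h.1 u hu).1 (flatten_eq_nil_iff.mp hL u hu)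

theorem exists_isLyndonFactorization_flatten_eq_append {u : List α} {L : List (List α)}
    (hu : LyndonWord (· < ·) u) (hL : IsLyndonFactorization L) :
    ∃ M, IsLyndonFactorization M ∧ M.flatten = u ++ L.flatten := by
  induction L generalizing u with
  | nil => exact ⟨[u], ⟨by simpa using hu, isChain_singleton u⟩, by simp⟩
  | cons v T ih =>
    by_cases huv : u < v
    · obtain ⟨M, hM, hMf⟩ := ih (hu.append (hL.1 v mem_cons_self) huv) hL.of_cons
      exact ⟨M, hM, by simp [hMf]⟩
    · exact ⟨u :: v :: T,
        ⟨forall_mem_cons.mpr ⟨hu, hL.1⟩, isChain_cons_cons.mpr ⟨not_lt.mp huv, hL.2⟩⟩, rfl⟩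

theorem exists_isLyndonFactorization (w : List α) :
    ∃ L, IsLyndonFactorization L ∧ L.flatten = w := by
  induction w with
  | nil => exact ⟨[], ⟨by simp, isChain_nil⟩, rfl⟩
  | cons a w ih =>
    obtain ⟨L, hL, rfl⟩ := ih
    exact exists_isLyndonFactorization_flatten_eq_append (LyndonWord.singleton a) hL

theorem IsLyndonFactorization.eq_of_flatten_eq {L₁ L₂ : List (List α)}
    (h₁ : IsLyndonFactorization L₁) (h₂ : IsLyndonFactorization L₂)
    (h : L₁.flatten = L₂.flatten) : L₁ = L₂ := by
  induction L₁ generalizing L₂ with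
  | nil => exact (h₂.eq_nil_of_flatten_eq_nil h.symm).symm
  | cons u T ih =>
    cases L₂ with
    | nil => exact h₁.eq_nil_of_flatten_eq_nil h
    | cons v S =>
      rw [flatten_cons, flatten_cons] at h
      have huv : u.length ≤ v.length :=
        (h₁.1 u mem_cons_self).length_le_of_isPrefix_append_flatten (h₂.1 v mem_cons_self).1
          h₂.le_head (h ▸ prefix_append u _)
      have hvu : v.length ≤ u.length :=
        (h₂.1 v mem_cons_self).length_le_of_isPrefix_append_flatten (h₁.1 u mem_cons_self).1
          h₁.le_head (h.symm ▸ prefix_append v _)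
      obtain ⟨rfl, hTS⟩ := append_inj h (le_antisymm huv hvu)
      rw [ih h₁.of_cons h₂.of_cons hTS]

theorem existsUnique_isLyndonFactorization (w : List α) :
    ∃! L, IsLyndonFactorization L ∧ L.flatten = w := by
  obtain ⟨L, hL, rfl⟩ := exists_isLyndonFactorization w
  exact ⟨L, ⟨hL, rfl⟩, fun M ⟨hM, hMf⟩ => hM.eq_of_flatten_eq hL hMf⟩

end Factorization

/-- every word over a totally ordered alphabet has a unique factorization as a
concatenation of Lyndon words which is weakly decreasing in lexicographic order. -/
theorem unique_lyndon_factorization {α : Type*} [LinearOrder α] (w : List α) :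
    ∃! L : List (List α),
      (∀ u ∈ L, LyndonWord (· < ·) u) ∧
      L.Chain' (fun u v => ¬ List.Lex (· < ·) u v) ∧
      L.flatten = w := by
  have hchain (L : List (List α)) :
      L.Chain' (fun u v => ¬ List.Lex (· < ·) u v) ↔ L.IsChain (· ≥ ·) := by
    simp only [List.Chain', List.lex_lt, not_lt, ge_iff_le]
  simpa only [IsLyndonFactorization, hchain, and_assoc] using
    existsUnique_isLyndonFactorization w

end
end

section
/- In the Hopf algebra NCSym of symmetric functions in non-commuting variables, the power sum basis is multiplicative: p_A · p_B = p_{A|B} for all set partitions A of [n] and B of [k]. -/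
open scoped Classical
noncomputable section

/-! ### Auxiliary lemmas for the proof -/

section AuxNC

/-- The restriction of `C` to `[n]`, as a set partition of `[n]`. -/
def lowP (n : ℕ) (C : Finset (Finset ℕ)) : Finset (Finset ℕ) := restrictP C (ground n)

/-- The restriction of `C` to `[n+1, n+k]`, shifted down to a set partition of `[k]`. -/
def highP (n k : ℕ) (C : Finset (Finset ℕ)) : Finset (Finset ℕ) :=
  (restrictP C (Finset.Icc (n+1) (n+k))).image fun b => b.image (· - n)

lemma mem_restrictP {C : Finset (Finset ℕ)} {S X : Finset ℕ} :
    X ∈ restrictP C S ↔ (∃ c ∈ C, c ∩ S = X) ∧ X.Nonempty := by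
  simp [restrictP, Finset.mem_filter, Finset.mem_image]

lemma restrictP_subset {C : Finset (Finset ℕ)} {S X : Finset ℕ}
    (h : X ∈ restrictP C S) : X ⊆ S := by
  obtain ⟨⟨c, _, rfl⟩, _⟩ := mem_restrictP.1 h
  exact Finset.inter_subset_right

lemma part_subset_ground {n : ℕ} {A : Finset (Finset ℕ)} (hA : IsSetPartition n A)
    {b : Finset ℕ} (hb : b ∈ A) : b ⊆ ground n := by
  rw [← hA.2.2]; exact Finset.le_sup (f := id) hb

lemma mem_ground_iff {n : ℕ} {A : Finset (Finset ℕ)} (hA : IsSetPartition n A) {x : ℕ} :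
    x ∈ ground n ↔ ∃ b ∈ A, x ∈ b := by
  rw [← hA.2.2]; simp [Finset.mem_sup]

lemma up_down {n k : ℕ} {b : Finset ℕ} (hb : b ⊆ Finset.Icc (n+1) (n+k)) :
    (b.image (· - n)).image (· + n) = b := by
  rw [Finset.image_image]
  rw [Finset.image_congr (g := id)]
  · exact Finset.image_id
  · intro x hx
    have := Finset.mem_Icc.1 (hb hx)
    simp only [Function.comp, id]
    omega

lemma down_shift (n : ℕ) (B : Finset (Finset ℕ)) :
    (shiftP n B).image (fun b => b.image (· - n)) = B := by
  unfold shiftP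
  rw [Finset.image_image]
  have h : ((fun b : Finset ℕ => b.image (· - n)) ∘ fun b : Finset ℕ => b.image (· + n)) = id := by
    funext b
    simp only [Function.comp, Finset.image_image]
    have h2 : ((· - n) ∘ (· + n) : ℕ → ℕ) = id := by funext x; simp
    rw [h2, Finset.image_id, id]
  rw [h, Finset.image_id]

lemma shift_highP {n k : ℕ} {C : Finset (Finset ℕ)} :
    shiftP n (highP n k C) = restrictP C (Finset.Icc (n+1) (n+k)) := by
  unfold shiftP highP
  rw [Finset.image_image]
  ext X
  simp only [Finset.mem_image, Function.comp]
  constructor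
  · rintro ⟨b, hb, rfl⟩
    rwa [up_down (restrictP_subset hb)]
  · intro hX
    exact ⟨X, hX, up_down (restrictP_subset hX)⟩

lemma lowP_isSP {n k : ℕ} {C : Finset (Finset ℕ)} (hC : IsSetPartition (n + k) C) :
    IsSetPartition n (lowP n C) := by
  unfold lowP
  refine ⟨?_, ?_, ?_⟩
  · intro X hX; exact (mem_restrictP.1 hX).2
  · intro X hX Y hY hne
    obtain ⟨⟨c, hc, rfl⟩, _⟩ := mem_restrictP.1 hX
    obtain ⟨⟨d, hd, rfl⟩, _⟩ := mem_restrictP.1 hY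
    have hcd : c ≠ d := by rintro rfl; exact hne rfl
    exact Finset.disjoint_of_subset_left Finset.inter_subset_left
      (Finset.disjoint_of_subset_right Finset.inter_subset_left (hC.2.1 c hc d hd hcd))
  · ext x
    simp only [Finset.mem_sup, id]
    constructor
    · rintro ⟨X, hX, hx⟩
      exact (restrictP_subset hX) hx
    · intro hx
      have hx' : x ∈ ground (n+k) := by
        simp only [ground, Finset.mem_Icc] at hx ⊢; omega
      obtain ⟨c, hc, hxc⟩ := (mem_ground_iff hC).1 hx'
      exact ⟨c ∩ ground n,
        mem_restrictP.2 ⟨⟨c, hc, rfl⟩, ⟨x, Finset.mem_inter.2 ⟨hxc, hx⟩⟩⟩,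
        Finset.mem_inter.2 ⟨hxc, hx⟩⟩

lemma highP_isSP {n k : ℕ} {C : Finset (Finset ℕ)} (hC : IsSetPartition (n + k) C) :
    IsSetPartition k (highP n k C) := by
  unfold highP
  refine ⟨?_, ?_, ?_⟩
  · intro X hX
    obtain ⟨b, hb, rfl⟩ := Finset.mem_image.1 hX
    exact ((mem_restrictP.1 hb).2).image _
  · intro X hX Y hY hne
    obtain ⟨b, hb, rfl⟩ := Finset.mem_image.1 hX
    obtain ⟨b', hb', rfl⟩ := Finset.mem_image.1 hY
    have hbb : b ≠ b' := by rintro rfl; exact hne rfl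
    have hdisj : Disjoint b b' := by
      obtain ⟨⟨c, hc, hc'⟩, _⟩ := mem_restrictP.1 hb
      obtain ⟨⟨d, hd, hd'⟩, _⟩ := mem_restrictP.1 hb'
      have hcd : c ≠ d := by rintro rfl; rw [hc'] at hd'; exact hbb hd'
      rw [← hc', ← hd']
      exact Finset.disjoint_of_subset_left Finset.inter_subset_left
        (Finset.disjoint_of_subset_right Finset.inter_subset_left (hC.2.1 c hc d hd hcd))
    rw [Finset.disjoint_left]
    intro z hz hz'
    obtain ⟨x, hx, rfl⟩ := Finset.mem_image.1 hz
    obtain ⟨y, hy, hxy⟩ := Finset.mem_image.1 hz'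
    have hxI := Finset.mem_Icc.1 (restrictP_subset hb hx)
    have hyI := Finset.mem_Icc.1 (restrictP_subset hb' hy)
    have hxyeq : y = x := by omega
    exact Finset.disjoint_left.1 hdisj hx (hxyeq ▸ hy)
  · ext x
    simp only [Finset.mem_sup, id]
    constructor
    · rintro ⟨X, hX, hx⟩
      obtain ⟨b, hb, rfl⟩ := Finset.mem_image.1 hX
      obtain ⟨y, hy, rfl⟩ := Finset.mem_image.1 hx
      have := Finset.mem_Icc.1 (restrictP_subset hb hy)
      simp only [ground, Finset.mem_Icc]; omega
    · intro hx
      have hx1 : 1 ≤ x ∧ x ≤ k := Finset.mem_Icc.1 hx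
      have hx' : x + n ∈ ground (n+k) := by
        simp only [ground, Finset.mem_Icc]; omega
      obtain ⟨c, hc, hxc⟩ := (mem_ground_iff hC).1 hx'
      have hxI : x + n ∈ Finset.Icc (n+1) (n+k) := by
        simp only [Finset.mem_Icc]; omega
      refine ⟨(c ∩ Finset.Icc (n+1) (n+k)).image (· - n),
        Finset.mem_image.2 ⟨_, mem_restrictP.2 ⟨⟨c, hc, rfl⟩,
          ⟨x+n, Finset.mem_inter.2 ⟨hxc, hxI⟩⟩⟩, rfl⟩, ?_⟩
      exact Finset.mem_image.2 ⟨x+n, Finset.mem_inter.2 ⟨hxc, hxI⟩, by omega⟩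

lemma ground_image_shift (n k : ℕ) :
    (ground k).image (· + n) = Finset.Icc (n+1) (n+k) := by
  ext x
  simp only [ground, Finset.mem_image, Finset.mem_Icc]
  constructor
  · rintro ⟨y, hy, rfl⟩
    omega
  · intro hx
    refine ⟨x - n, ?_, ?_⟩ <;> omega

lemma memD {n k : ℕ} {e : Finset ℕ} (he : e ∈ concatP n (onePartP n) (onePartP k)) :
    e = ground n ∨ e = Finset.Icc (n+1) (n+k) := by
  unfold concatP onePartP shiftP at he
  rcases Finset.mem_union.1 he with h | h
  · split_ifs at h with h0
    · simp at h
    · left; simpa using h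
  · right
    split_ifs at h with h0
    · simp at h
    · simp only [Finset.image_singleton, Finset.mem_singleton] at h
      subst h
      exact ground_image_shift n k

lemma groundMemD {n k : ℕ} (hn : n ≠ 0) :
    ground n ∈ concatP n (onePartP n) (onePartP k) := by
  unfold concatP onePartP
  apply Finset.mem_union_left
  rw [if_neg hn]
  exact Finset.mem_singleton_self _

lemma iccMemD {n k : ℕ} (hk : k ≠ 0) :
    Finset.Icc (n+1) (n+k) ∈ concatP n (onePartP n) (onePartP k) := by
  unfold concatP onePartP shiftP
  apply Finset.mem_union_right
  rw [if_neg hk]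
  simp only [Finset.image_singleton, Finset.mem_singleton]
  exact (ground_image_shift n k).symm

lemma meetP_eq {n k : ℕ} {C : Finset (Finset ℕ)} (hC : IsSetPartition (n + k) C) :
    meetP C (concatP n (onePartP n) (onePartP k)) = concatP n (lowP n C) (highP n k C) := by
  have hrhs : concatP n (lowP n C) (highP n k C)
      = restrictP C (ground n) ∪ restrictP C (Finset.Icc (n+1) (n+k)) := by
    unfold concatP lowP
    rw [shift_highP]
  rw [hrhs]
  ext X
  simp only [meetP, Finset.mem_filter, Finset.mem_image, Finset.mem_product,
    Finset.mem_union, Prod.exists]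
  constructor
  · rintro ⟨⟨c, e, ⟨hc, he⟩, rfl⟩, hne⟩
    rcases memD he with rfl | rfl
    · exact Or.inl (mem_restrictP.2 ⟨⟨c, hc, rfl⟩, hne⟩)
    · exact Or.inr (mem_restrictP.2 ⟨⟨c, hc, rfl⟩, hne⟩)
  · rintro (hX | hX)
    · obtain ⟨⟨c, hc, rfl⟩, hne⟩ := mem_restrictP.1 hX
      have hn : n ≠ 0 := by
        obtain ⟨x, hx⟩ := hne
        have := Finset.mem_Icc.1 (Finset.mem_of_mem_inter_right hx)
        omega
      exact ⟨⟨c, ground n, ⟨hc, groundMemD hn⟩, rfl⟩, hne⟩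
    · obtain ⟨⟨c, hc, rfl⟩, hne⟩ := mem_restrictP.1 hX
      have hk : k ≠ 0 := by
        obtain ⟨x, hx⟩ := hne
        have := Finset.mem_Icc.1 (Finset.mem_of_mem_inter_right hx)
        omega
      exact ⟨⟨c, Finset.Icc (n+1) (n+k), ⟨hc, iccMemD hk⟩, rfl⟩, hne⟩

lemma concat_filter_low {n k : ℕ} {A B : Finset (Finset ℕ)}
    (hA : IsSetPartition n A) (hB : IsSetPartition k B) :
    (concatP n A B).filter (· ⊆ ground n) = A := by
  ext X
  simp only [Finset.mem_filter, concatP, Finset.mem_union]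
  constructor
  · rintro ⟨hX | hX, hsub⟩
    · exact hX
    · exfalso
      obtain ⟨b, hb, rfl⟩ := Finset.mem_image.1 hX
      obtain ⟨x, hx⟩ := hB.1 b hb
      have hx1 : 1 ≤ x := (Finset.mem_Icc.1 (part_subset_ground hB hb hx)).1
      have : x + n ∈ ground n := hsub (Finset.mem_image.2 ⟨x, hx, rfl⟩)
      have := Finset.mem_Icc.1 this
      omega
  · intro hX
    exact ⟨Or.inl hX, part_subset_ground hA hX⟩

lemma concat_filter_high {n k : ℕ} {A B : Finset (Finset ℕ)}
    (hA : IsSetPartition n A) (hB : IsSetPartition k B) :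
    (concatP n A B).filter (fun X => ¬ X ⊆ ground n) = shiftP n B := by
  ext X
  simp only [Finset.mem_filter, concatP, Finset.mem_union]
  constructor
  · rintro ⟨hX | hX, hsub⟩
    · exact absurd (part_subset_ground hA hX) hsub
    · exact hX
  · intro hX
    refine ⟨Or.inr hX, ?_⟩
    obtain ⟨b, hb, rfl⟩ := Finset.mem_image.1 hX
    obtain ⟨x, hx⟩ := hB.1 b hb
    have hx1 : 1 ≤ x := (Finset.mem_Icc.1 (part_subset_ground hB hb hx)).1
    intro hsub
    have : x + n ∈ ground n := hsub (Finset.mem_image.2 ⟨x, hx, rfl⟩)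
    have := Finset.mem_Icc.1 this
    omega

lemma concatP_inj_s7 {n k : ℕ} {A A' B B' : Finset (Finset ℕ)}
    (hA : IsSetPartition n A) (hA' : IsSetPartition n A')
    (hB : IsSetPartition k B) (hB' : IsSetPartition k B')
    (h : concatP n A B = concatP n A' B') : A = A' ∧ B = B' := by
  have h1 : A = A' := by
    rw [← concat_filter_low hA hB, h, concat_filter_low hA' hB']
  have h2 : shiftP n B = shiftP n B' := by
    rw [← concat_filter_high hA hB, h, concat_filter_high hA' hB']
  exact ⟨h1, by rw [← down_shift n B, h2, down_shift]⟩

lemma refines_concat_iff {n k : ℕ} {A B C : Finset (Finset ℕ)}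
    (hA : IsSetPartition n A) (hB : IsSetPartition k B)
    (hC : IsSetPartition (n + k) C) :
    refines (concatP n A B) C ↔ refines A (lowP n C) ∧ refines B (highP n k C) := by
  constructor
  · intro h
    constructor
    · intro a ha
      obtain ⟨c, hc, hac⟩ := h a (Finset.mem_union_left _ ha)
      refine ⟨c ∩ ground n, mem_restrictP.2 ⟨⟨c, hc, rfl⟩, ?_⟩, ?_⟩
      · obtain ⟨x, hx⟩ := hA.1 a ha
        exact ⟨x, Finset.mem_inter.2 ⟨hac hx, part_subset_ground hA ha hx⟩⟩
      · intro x hx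
        exact Finset.mem_inter.2 ⟨hac hx, part_subset_ground hA ha hx⟩
    · intro b hb
      have hmem : b.image (· + n) ∈ concatP n A B :=
        Finset.mem_union_right _ (Finset.mem_image.2 ⟨b, hb, rfl⟩)
      obtain ⟨c, hc, hbc⟩ := h _ hmem
      have hbI : ∀ x ∈ b, x + n ∈ c ∩ Finset.Icc (n+1) (n+k) := by
        intro x hx
        have hxg := Finset.mem_Icc.1 (part_subset_ground hB hb hx)
        refine Finset.mem_inter.2 ⟨hbc (Finset.mem_image.2 ⟨x, hx, rfl⟩), ?_⟩
        simp only [Finset.mem_Icc]; omega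
      obtain ⟨x0, hx0⟩ := hB.1 b hb
      refine ⟨(c ∩ Finset.Icc (n+1) (n+k)).image (· - n),
        Finset.mem_image.2 ⟨_, mem_restrictP.2 ⟨⟨c, hc, rfl⟩, ⟨x0 + n, hbI x0 hx0⟩⟩, rfl⟩, ?_⟩
      intro x hx
      exact Finset.mem_image.2 ⟨x + n, hbI x hx, by omega⟩
  · rintro ⟨h1, h2⟩ X hX
    rcases Finset.mem_union.1 hX with ha | hs
    · obtain ⟨Y, hY, hXY⟩ := h1 X ha
      obtain ⟨⟨c, hc, hce⟩, _⟩ := mem_restrictP.1 hY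
      exact ⟨c, hc, fun x hx => Finset.mem_of_mem_inter_left (hce ▸ hXY hx)⟩
    · obtain ⟨b, hb, rfl⟩ := Finset.mem_image.1 hs
      obtain ⟨Y, hY, hbY⟩ := h2 b hb
      have hYmem : Y.image (· + n) ∈ restrictP C (Finset.Icc (n+1) (n+k)) := by
        rw [← shift_highP (n := n) (k := k)]
        exact Finset.mem_image.2 ⟨Y, hY, rfl⟩
      obtain ⟨⟨c, hc, hceq⟩, _⟩ := mem_restrictP.1 hYmem
      refine ⟨c, hc, ?_⟩
      intro z hz
      obtain ⟨x, hx, rfl⟩ := Finset.mem_image.1 hz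
      have hmem : x + n ∈ Y.image (· + n) := Finset.mem_image.2 ⟨x, hbY hx, rfl⟩
      rw [← hceq] at hmem
      exact Finset.mem_of_mem_inter_left hmem

lemma mem_SPs {n : ℕ} {P : Finset (Finset ℕ) → Prop} {A : Finset (Finset ℕ)} :
    A ∈ SPs n P ↔ IsSetPartition n A ∧ P A := by
  unfold SPs
  simp only [Finset.mem_filter, Finset.mem_powerset, and_iff_right_iff_imp]
  rintro ⟨hA, -⟩
  intro b hb
  exact Finset.mem_powerset.2 (part_subset_ground hA hb)

end AuxNC

/-- in any algebra with a family `m` indexed by set partitions satisfying the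
product rule of the monomial basis of `NCSym`, the power sums `p_A = ∑_{B ≥ A} m_B` are
multiplicative: `p_A p_B = p_{A|B}`. -/
theorem power_basis_multiplicative {R : Type*} [Ring R]
    (m : ℕ → Finset (Finset ℕ) → R)
    (hmul : ∀ n k A B, IsSetPartition n A → IsSetPartition k B →
      m n A * m k B =
        ∑ C ∈ SPs (n + k)
            (fun C => meetP C (concatP n (onePartP n) (onePartP k)) = concatP n A B),
          m (n + k) C)
    (n k : ℕ) (A B : Finset (Finset ℕ))
    (hA : IsSetPartition n A) (hB : IsSetPartition k B) :
    (∑ A' ∈ SPs n (fun A' => refines A A'), m n A') *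
      (∑ B' ∈ SPs k (fun B' => refines B B'), m k B') =
    ∑ C ∈ SPs (n + k) (fun C => refines (concatP n A B) C), m (n + k) C := by
  classical
  rw [Finset.sum_mul_sum]
  refine (Finset.sum_congr rfl fun A' hA' => Finset.sum_congr rfl fun B' hB' =>
    hmul n k A' B' (mem_SPs.1 hA').1 (mem_SPs.1 hB').1).trans ?_
  have hmaps : ∀ C ∈ SPs (n+k) (fun C => refines (concatP n A B) C),
      (lowP n C, highP n k C) ∈
        (SPs n (fun A' => refines A A')) ×ˢ (SPs k fun B' => refines B B') := by
    intro C hC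
    obtain ⟨hCsp, hCref⟩ := mem_SPs.1 hC
    obtain ⟨h1, h2⟩ := (refines_concat_iff hA hB hCsp).1 hCref
    exact Finset.mem_product.2 ⟨mem_SPs.2 ⟨lowP_isSP hCsp, h1⟩,
      mem_SPs.2 ⟨highP_isSP hCsp, h2⟩⟩
  rw [← Finset.sum_fiberwise_of_maps_to hmaps (m (n+k)), Finset.sum_product]
  refine Finset.sum_congr rfl fun A' hA' => Finset.sum_congr rfl fun B' hB' =>
    Finset.sum_congr ?_ fun _ _ => rfl
  ext C
  simp only [Finset.mem_filter]
  constructor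
  · intro hC
    obtain ⟨hCsp, hmeet⟩ := mem_SPs.1 hC
    have hme := meetP_eq (n := n) (k := k) hCsp
    rw [hme] at hmeet
    obtain ⟨e1, e2⟩ := concatP_inj_s7 (lowP_isSP hCsp) (mem_SPs.1 hA').1
      (highP_isSP hCsp) (mem_SPs.1 hB').1 hmeet
    refine ⟨mem_SPs.2 ⟨hCsp, ?_⟩, by rw [e1, e2]⟩
    exact (refines_concat_iff hA hB hCsp).2
      ⟨e1 ▸ (mem_SPs.1 hA').2, e2 ▸ (mem_SPs.1 hB').2⟩
  · rintro ⟨hC, hgC⟩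
    obtain ⟨hCsp, hCref⟩ := mem_SPs.1 hC
    rw [Prod.mk.injEq] at hgC
    refine mem_SPs.2 ⟨hCsp, ?_⟩
    rw [meetP_eq (n := n) (k := k) hCsp, hgC.1, hgC.2]

end
end
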